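/- The Riemann theta function satisfies the quasi-periodicity law θ(τ, z + n + τm) = exp(−πi mᵀτm − 2πi mᵀz) · θ(τ, z) for all m, n ∈ ℤ^g, τ ∈ H_g, z ∈ ℂ^g. -/

import Mathlib

open Matrix Complex

noncomputable section

def SiegelUpperHalfSpace (g : ℕ) : Set (Matrix (Fin g) (Fin g) ℂ) :=
  {τ | τ.IsSymm ∧ (Matrix.of fun i j => (τ i j).im).PosDef}

/-- The Riemann theta function `θ(τ,z) = Σ_{k ∈ ℤ^g} exp(πi kᵀτk + 2πi kᵀz)`. -/
def riemannTheta {g : ℕ} (τ : Matrix (Fin g) (Fin g) ℂ) (z : Fin g → ℂ) : ℂ :=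
  ∑' k : Fin g → ℤ,
    Complex.exp (Real.pi * Complex.I * (∑ i, ∑ j, (k i : ℂ) * τ i j * (k j : ℂ))
      + 2 * Real.pi * Complex.I * ∑ i, (k i : ℂ) * z i)

/-! Shifting `z` by `n` multiplies the `k`-th term by `exp(2πi kᵀn) = 1`; shifting it by `τm` turns
the `k`-th term into `exp(−πi mᵀτm − 2πi mᵀz)` times the `(k + m)`-th one, by completing the square
with the symmetric matrix `τ`. Both identities hold term by term after reindexing the sum over
`ℤ^g`, so no convergence is needed. -/

theorem Matrix.IsSymm.add_dotProduct_mulVec_add {n R : Type*} [Fintype n] [CommRing R]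
    {A : Matrix n n R} (hA : A.IsSymm) (x y : n → R) :
    (x + y) ⬝ᵥ A *ᵥ (x + y) = x ⬝ᵥ A *ᵥ x + 2 * (x ⬝ᵥ A *ᵥ y) + y ⬝ᵥ A *ᵥ y := by
  have hyx : y ⬝ᵥ A *ᵥ x = x ⬝ᵥ A *ᵥ y := by
    rw [dotProduct_comm, dotProduct_mulVec, ← mulVec_transpose, hA.eq]
  simp only [mulVec_add, dotProduct_add, add_dotProduct, hyx]
  ring

theorem Matrix.sum_sum_mul_mul_eq_dotProduct_mulVec {n R : Type*} [Fintype n] [CommRing R]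
    (A : Matrix n n R) (x y : n → R) :
    ∑ i, ∑ j, x i * A i j * y j = x ⬝ᵥ A *ᵥ y := by
  simp only [dotProduct, mulVec, Finset.mul_sum, mul_assoc]

theorem riemannTheta_eq_tsum_dotProduct {g : ℕ} (τ : Matrix (Fin g) (Fin g) ℂ) (z : Fin g → ℂ) :
    riemannTheta τ z = ∑' k : Fin g → ℤ,
      exp (Real.pi * I * ((fun i => (k i : ℂ)) ⬝ᵥ τ *ᵥ fun i => (k i : ℂ))
        + 2 * Real.pi * I * ((fun i => (k i : ℂ)) ⬝ᵥ z)) := by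
  simp only [riemannTheta, sum_sum_mul_mul_eq_dotProduct_mulVec, dotProduct]

theorem riemannTheta_add_intCast {g : ℕ} (τ : Matrix (Fin g) (Fin g) ℂ) (z : Fin g → ℂ)
    (n : Fin g → ℤ) :
    riemannTheta τ (z + fun i => (n i : ℂ)) = riemannTheta τ z := by
  simp only [riemannTheta_eq_tsum_dotProduct]
  refine tsum_congr fun k => ?_
  have hkn : (fun i => (k i : ℂ)) ⬝ᵥ (fun i => (n i : ℂ)) = ((k ⬝ᵥ n : ℤ) : ℂ) := by
    simp [dotProduct]
  rw [dotProduct_add, mul_add, ← add_assoc, exp_add, hkn, mul_comm _ ((k ⬝ᵥ n : ℤ) : ℂ),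
    exp_int_mul_two_pi_mul_I, mul_one]

theorem riemannTheta_add_mulVec_intCast {g : ℕ} {τ : Matrix (Fin g) (Fin g) ℂ} (hτ : τ.IsSymm)
    (z : Fin g → ℂ) (m : Fin g → ℤ) :
    riemannTheta τ (z + τ *ᵥ fun i => (m i : ℂ)) =
      exp (-(Real.pi * I * ((fun i => (m i : ℂ)) ⬝ᵥ τ *ᵥ fun i => (m i : ℂ)))
        - 2 * Real.pi * I * ((fun i => (m i : ℂ)) ⬝ᵥ z)) * riemannTheta τ z := by
  simp only [riemannTheta_eq_tsum_dotProduct]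
  conv_rhs => rw [← (Equiv.addRight m).tsum_eq, ← tsum_mul_left]
  refine tsum_congr fun k => ?_
  have hcast : (fun i => ((k + m) i : ℂ)) = (fun i => (k i : ℂ)) + fun i => (m i : ℂ) := by
    ext i; simp
  rw [← exp_add, Equiv.coe_addRight, hcast, hτ.add_dotProduct_mulVec_add]
  simp only [dotProduct_add, add_dotProduct]
  congr 1
  ring

/-- Quasi-periodicity of the Riemann theta function:
`θ(τ, z + n + τm) = exp(−πi mᵀτm − 2πi mᵀz) · θ(τ, z)` for `m, n ∈ ℤ^g`. -/
theorem riemannTheta_quasi_periodic {g : ℕ}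
    (τ : Matrix (Fin g) (Fin g) ℂ) (hτ : τ ∈ SiegelUpperHalfSpace g)
    (z : Fin g → ℂ) (m n : Fin g → ℤ) :
    riemannTheta τ (z + (fun i => (n i : ℂ)) + τ.mulVec (fun i => (m i : ℂ))) =
      Complex.exp (-(Real.pi * Complex.I *
          (∑ i, ∑ j, (m i : ℂ) * τ i j * (m j : ℂ)))
        - 2 * Real.pi * Complex.I * ∑ i, (m i : ℂ) * z i) *
      riemannTheta τ z := by
  rw [add_right_comm, riemannTheta_add_intCast, riemannTheta_add_mulVec_intCast hτ.1,
    sum_sum_mul_mul_eq_dotProduct_mulVec]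
  rfl
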